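/- arXiv:1909.11613 — 2 statements merged into one kernel-verified Lean document; each statement's English description precedes it below -/
import Mathlib

section
/- In an associative algebra with elements e₁, e₂, k₁ satisfying e₂² = 0, e₂e₁ = q·e₁e₂ − q·[1]·e₃ (where e₃ := e₁e₂ − q⁻¹e₂e₁), and e₃e₁ = q⁻¹e₁e₃, one has for every r ≥ 1: e₂e₁^r = q^r e₁^r e₂ − q[r] e₁^{r−1} e₃, where [r] = (q^r − q^{−r})/(q − q^{−1}). -/
/-- The balanced `q`-integer `[m] = (q^m − q^{−m})/(q − q^{−1})`. -/
noncomputable def qInt {K : Type*} [Field K] (q : K) (m : ℕ) : K :=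
  (q ^ m - q⁻¹ ^ m) / (q - q⁻¹)

lemma qInt_step {K : Type*} [Field K] (q : K) (hne : q - q⁻¹ ≠ 0) (r : ℕ) :
    q * qInt q (r + 1) = q ^ r * (q * qInt q 1) + q * qInt q r * q⁻¹ := by
  simp only [qInt, ← mul_div_assoc, div_mul_eq_mul_div, mul_div_assoc', ← add_div]
  rw [div_eq_div_iff hne hne]
  ring

/-- In an associative algebra with `e₂² = 0`, `e₂e₁ = q e₁e₂ − q[1]e₃` (where
`e₃ = e₁e₂ − q⁻¹e₂e₁`) and `e₃e₁ = q⁻¹e₁e₃`, for every `r ≥ 1` one has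
`e₂e₁^r = q^r e₁^r e₂ − q[r] e₁^{r−1} e₃`. -/
theorem e2_pow_e1_comm {K A : Type*} [Field K] [Ring A] [Algebra K A]
    (q : K) (hq : q ≠ 0) (hqm : ∀ m : ℕ, 0 < m → q ^ m ≠ q⁻¹ ^ m)
    (e₁ e₂ e₃ : A)
    (he₃ : e₃ = e₁ * e₂ - q⁻¹ • (e₂ * e₁))
    (he₂sq : e₂ * e₂ = 0)
    (h1 : e₂ * e₁ = q • (e₁ * e₂) - (q * qInt q 1) • e₃)
    (h2 : e₃ * e₁ = q⁻¹ • (e₁ * e₃)) :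
    ∀ r : ℕ, 1 ≤ r →
      e₂ * e₁ ^ r = (q ^ r) • (e₁ ^ r * e₂) - (q * qInt q r) • (e₁ ^ (r - 1) * e₃) := by
  have hne : q - q⁻¹ ≠ 0 := by
    have := hqm 1 one_pos
    simpa [sub_ne_zero] using this
  intro r hr
  induction r, hr using Nat.le_induction with
  | base => simpa using h1
  | succ r hr ih =>
    have hr1 : r - 1 + 1 = r := Nat.succ_pred_eq_of_pos hr
    calc e₂ * e₁ ^ (r + 1) = (e₂ * e₁ ^ r) * e₁ := by rw [pow_succ, mul_assoc]
      _ = (q ^ r) • (e₁ ^ r * (e₂ * e₁)) - (q * qInt q r) • (e₁ ^ (r - 1) * (e₃ * e₁)) := by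
          rw [ih]; simp [sub_mul, smul_mul_assoc, mul_assoc]
      _ = (q ^ (r + 1)) • (e₁ ^ (r + 1) * e₂)
          - (q * qInt q (r + 1)) • (e₁ ^ (r + 1 - 1) * e₃) := by
          rw [h1, h2, qInt_step q hne r]
          simp only [Nat.add_sub_cancel, mul_sub, mul_smul_comm, smul_sub, smul_smul,
            ← mul_assoc, ← pow_succ, hr1, add_smul]
          rw [pow_succ, sub_sub]
end

section
/- Every finite-dimensional Hopf algebra over a field has a bijective antipode. -/
/-!
The dual `H★` of `H`, with the convolution product, is a Hopf module: a left `H★`-module by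
multiplication and a right `H`-module by `u ↼ a := hit (S a) u`, i.e. `(u ↼ a) x = u (x * S a)`,
and the two structures are compatible. As in the fundamental theorem of Hopf modules,
`P u = ∑ᵢ (bᵢ^* * u) ↼ S bᵢ` lands in the left integrals, is not identically zero, and satisfies
`P (f * (λ ↼ h)) = f h • λ` for every left integral `λ`. Taking `λ ≠ 0`, the element `h` is
recovered from `λ ↼ h`, which only depends on `S h`: so `S` is injective, hence bijective since
`H` is finite-dimensional.
-/

open Coalgebra TensorProduct WithConv
open Algebra.TensorProduct (includeLeft includeRight)

namespace HopfAlgebra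

variable {R H A ι : Type*} [CommSemiring R]

local notation "H★" => WithConv (Module.Dual R H)

section Algebra

variable [Semiring H] [Algebra R H]

/-- The left hit action `a ⇀ f` of `H` on its dual. -/
def hit : H →ₗ[R] H★ →ₗ[R] H★ :=
  LinearMap.mk₂ R (fun a f => toConv (f.ofConv ∘ₗ LinearMap.mulRight R a))
    (fun _ _ _ => by ext; simp [mul_add])
    (fun _ _ _ => by ext; simp)
    (fun _ _ _ => by ext; simp)
    (fun _ _ _ => by ext; simp)

@[simp] lemma hit_apply (a : H) (f : H★) (x : H) : hit a f x = f (x * a) := rfl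

lemma hit_mul (a b : H) (f : H★) : hit (a * b) f = hit a (hit b f) := by
  ext x; simp [mul_assoc]

@[simp] lemma hit_one (f : H★) : hit 1 f = f := by ext x; simp

lemma map_hit_left (a : H) (f g : H★) (t : H ⊗[R] H) :
    map (hit a f).ofConv g.ofConv t = map f.ofConv g.ofConv (t * (a ⊗ₜ 1)) := by
  induction t using TensorProduct.induction_on with
  | zero => simp
  | tmul x y => simp [Algebra.TensorProduct.tmul_mul_tmul]
  | add s t hs ht => simp [add_mul, hs, ht]

lemma map_hit_right (a : H) (f g : H★) (t : H ⊗[R] H) :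
    map f.ofConv (hit a g).ofConv t = map f.ofConv g.ofConv (t * (1 ⊗ₜ a)) := by
  induction t using TensorProduct.induction_on with
  | zero => simp
  | tmul x y => simp [Algebra.TensorProduct.tmul_mul_tmul]
  | add s t hs ht => simp [add_mul, hs, ht]

end Algebra

def IsLeftIntegral [Semiring H] [Bialgebra R H] (l : H★) : Prop := ∀ f : H★, f * l = f 1 • l

variable [Semiring H] [HopfAlgebra R H]

lemma algHom_comp_antipode_mul [Semiring A] [Algebra R A] (f : H →ₐ[R] A) :
    toConv (f.toLinearMap ∘ₗ antipode R) * toConv f.toLinearMap = 1 := by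
  ext x
  rw [(ℛ R x).convMul_apply]
  simp [← map_mul, ← map_sum, sum_antipode_mul_eq_algebraMap_counit]

/-- `Δ (S a) = ∑ S a₂ ⊗ S a₁`, written as a convolution product. Both sides are convolution
inverses of `Δ = includeLeft * includeRight`. -/
lemma toConv_comul_comp_antipode :
    toConv (comul ∘ₗ antipode R) =
      toConv ((includeRight : H →ₐ[R] H ⊗[R] H).toLinearMap ∘ₗ antipode R) *
        toConv ((includeLeft : H →ₐ[R] H ⊗[R] H).toLinearMap ∘ₗ antipode R) := by
  have hcomul : toConv (comul : H →ₗ[R] H ⊗[R] H) =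
      toConv (includeLeft : H →ₐ[R] H ⊗[R] H).toLinearMap *
        toConv (includeRight : H →ₐ[R] H ⊗[R] H).toLinearMap := by
    ext x
    rw [(ℛ R x).convMul_apply]
    simp [← (ℛ R x).eq, Algebra.TensorProduct.tmul_mul_tmul]
  refine (left_inv_eq_right_inv ?_ LinearMap.comul_right_inv).symm
  rw [hcomul, mul_assoc, ← mul_assoc _ (toConv includeLeft.toLinearMap),
    algHom_comp_antipode_mul, one_mul, algHom_comp_antipode_mul]

protected def _root_.Coalgebra.Repr.antipode {a : H} (𝓡 : Repr R a ι) :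
    Repr R (antipode R a) ι where
  index := 𝓡.index
  left i := antipode R (𝓡.right i)
  right i := antipode R (𝓡.left i)
  eq := by
    have := congrArg (fun F => F.ofConv a) (toConv_comul_comp_antipode (R := R) (H := H))
    rw [𝓡.convMul_apply] at this
    simpa [Algebra.TensorProduct.tmul_mul_tmul] using this.symm

lemma sum_comul_antipode_mul_tmul_one {h : H} (𝓡 : Repr R h ι) :
    ∑ i ∈ 𝓡.index, comul (antipode R (𝓡.left i)) * (𝓡.right i ⊗ₜ[R] 1) =
      1 ⊗ₜ antipode R h := by
  have := congrArg (fun F => (F * toConv (includeLeft : H →ₐ[R] H ⊗[R] H).toLinearMap).ofConv h)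
    (toConv_comul_comp_antipode (R := R) (H := H))
  rw [mul_assoc, algHom_comp_antipode_mul, mul_one, 𝓡.convMul_apply] at this
  simpa using this

lemma mul_hit_antipode (f u : H★) {h : H} (𝓡 : Repr R h ι) :
    f * hit (antipode R h) u =
      ∑ i ∈ 𝓡.index, hit (antipode R (𝓡.left i)) (hit (𝓡.right i) f * u) := by
  ext w
  simp only [LinearMap.convMul_apply, map_hit_left, map_hit_right, ofConv_sum,
    LinearMap.sum_apply, hit_apply]
  rw [← sum_comul_antipode_mul_tmul_one 𝓡, Finset.mul_sum]
  simp [← map_sum, mul_assoc]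

lemma IsLeftIntegral.mul_hit_antipode {l : H★} (hl : IsLeftIntegral l) (f : H★) {a : H}
    (𝓡 : Repr R a ι) :
    f * hit (antipode R a) l = ∑ i ∈ 𝓡.index, f (𝓡.right i) • hit (antipode R (𝓡.left i)) l := by
  simp [HopfAlgebra.mul_hit_antipode f l 𝓡, hl _]

section Basis

variable {κ V : Type*} [Fintype κ] [AddCommMonoid V] [Module R V] (b : Module.Basis κ R H)

lemma sum_coord_smul (x : H) (F : H →ₗ[R] V) : ∑ i, b.coord i x • F (b i) = F x := by
  simp_rw [← map_smul, ← map_sum, b.coord_apply, b.sum_repr]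

lemma sum_sum_coord_mul_apply_smul_tmul (x : H) :
    ∑ i, ∑ j, (toConv (b.coord j) * toConv (b.coord i)) x • (b j ⊗ₜ[R] b i) = comul x := by
  set 𝓡 := ℛ R x
  calc ∑ i, ∑ j, (toConv (b.coord j) * toConv (b.coord i)) x • (b j ⊗ₜ[R] b i)
      = ∑ r ∈ 𝓡.index,
          (∑ j, b.coord j (𝓡.left r) • b j) ⊗ₜ (∑ i, b.coord i (𝓡.right r) • b i) := by
        simp_rw [𝓡.convMul_apply, sum_tmul, tmul_sum, smul_tmul_smul, Finset.sum_smul]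
        rw [Finset.sum_comm]
        exact (Finset.sum_congr rfl fun j _ => Finset.sum_comm).trans Finset.sum_comm
    _ = comul x := by simp_rw [b.coord_apply, b.sum_repr, 𝓡.eq]

/-- The product of `H★` is dual to `Δ`, seen through the canonical element `∑ᵢ bᵢ^* ⊗ bᵢ`;
this is the coassociativity of the coaction of `H` on `H★`. -/
lemma sum_sum_coord_mul (Φ : H★ →ₗ[R] H ⊗[R] H →ₗ[R] V) :
    ∑ i, ∑ j, Φ (toConv (b.coord j) * toConv (b.coord i)) (b j ⊗ₜ b i) =
      ∑ i, Φ (toConv (b.coord i)) (comul (b i)) := by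
  simp_rw [← sum_sum_coord_mul_apply_smul_tmul b (b _), map_sum, map_smul]
  conv_lhs =>
    enter [2, i, 2, j]
    rw [← toConv_ofConv (toConv (b.coord j) * toConv (b.coord i)),
      ← b.sum_dual_apply_smul_coord (toConv (b.coord j) * toConv (b.coord i)).ofConv]
  simp only [toConv_sum, toConv_smul, map_sum, map_smul, LinearMap.sum_apply,
    LinearMap.smul_apply]
  exact (Finset.sum_congr rfl fun i _ => Finset.sum_comm).trans Finset.sum_comm

lemma sum_hit_antipode_mul_coord (f : H★) :
    ∑ i, hit (antipode R (b i)) f * toConv (b.coord i) = f 1 • 1 := by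
  ext w
  simp only [ofConv_sum, LinearMap.sum_apply, (ℛ R w).convMul_apply, hit_apply]
  rw [Finset.sum_comm]
  have key (y z : H) : ∑ i, f (y * antipode R (b i)) * b.coord i z = f (y * antipode R z) := by
    simpa [mul_comm] using sum_coord_smul b z (f.ofConv ∘ₗ LinearMap.mulLeft R y ∘ₗ antipode R)
  simp_rw [key, ← map_sum, sum_mul_antipode_eq_smul]
  simp [mul_comm]

/-- The projection `P u = ∑ u₀ ↼ S u₁` onto the left integrals, where `u ↦ ∑ᵢ bᵢ^* * u ⊗ bᵢ` is
the coaction of `H` on `H★`. -/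
noncomputable def integralProj : H★ →ₗ[R] H★ :=
  ∑ i, hit (antipode R (antipode R (b i))) ∘ₗ LinearMap.mulLeft R (toConv (b.coord i))

lemma integralProj_apply (u : H★) :
    integralProj b u = ∑ i, hit (antipode R (antipode R (b i))) (toConv (b.coord i) * u) := by
  simp [integralProj]

lemma isLeftIntegral_integralProj (u : H★) : IsLeftIntegral (integralProj b u) := by
  intro f
  let B : H →ₗ[R] H →ₗ[R] Module.End R H★ := LinearMap.mk₂ R
    (fun y x => hit (antipode R (antipode R x)) ∘ₗ LinearMap.mulLeft R (hit (antipode R y) f))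
    (fun _ _ _ => by ext; simp [add_mul])
    (fun _ _ _ => by ext; simp [map_smul_left])
    (fun _ _ _ => by ext; simp)
    (fun _ _ _ => by ext; simp)
  let Φ : H★ →ₗ[R] H ⊗[R] H →ₗ[R] H★ := (lift B).flip ∘ₗ LinearMap.mulRight R u
  have hΦ (g : H★) (y x : H) :
      Φ g (y ⊗ₜ x) = hit (antipode R (antipode R x)) (hit (antipode R y) f * (g * u)) := rfl
  rw [integralProj_apply, Finset.mul_sum]
  calc ∑ i, f * hit (antipode R (antipode R (b i))) (toConv (b.coord i) * u)
      = ∑ i, Φ (toConv (b.coord i)) (comul (b i)) := by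
        refine Finset.sum_congr rfl fun i _ => ?_
        rw [mul_hit_antipode f _ (ℛ R (b i)).antipode, ← (ℛ R (b i)).eq, map_sum]
        simp [hΦ, Coalgebra.Repr.antipode]
    _ = ∑ i, ∑ j, Φ (toConv (b.coord j) * toConv (b.coord i)) (b j ⊗ₜ b i) :=
        (sum_sum_coord_mul b Φ).symm
    _ = ∑ i, hit (antipode R (antipode R (b i)))
          ((∑ j, hit (antipode R (b j)) f * toConv (b.coord j)) * (toConv (b.coord i) * u)) := by
        simp [hΦ, map_sum, Finset.sum_mul, mul_assoc]
    _ = f 1 • ∑ i, hit (antipode R (antipode R (b i))) (toConv (b.coord i) * u) := by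
        simp [sum_hit_antipode_mul_coord, Finset.smul_sum]

/-- The reconstruction formula `u = ∑ P (u₀) ↼ u₁` for `u = ε`, evaluated at `1`. -/
lemma sum_integralProj_coord_apply_antipode :
    ∑ i, integralProj b (toConv (b.coord i)) (antipode R (b i)) = 1 := by
  let Φ : H★ →ₗ[R] H ⊗[R] H →ₗ[R] R := Module.Dual.transpose (R := R)
      (antipode R ∘ₗ LinearMap.mul' R H ∘ₗ (antipode R).rTensor H) ∘ₗ
    (WithConv.linearEquiv R _).toLinearMap
  have hΦ (g : H★) (y x : H) : Φ g (y ⊗ₜ x) = g (antipode R x * antipode R (antipode R y)) := by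
    simp [Φ, Module.Dual.transpose_apply, antipode_mul_antidistrib]
  calc ∑ i, integralProj b (toConv (b.coord i)) (antipode R (b i))
      = ∑ i, ∑ j, Φ (toConv (b.coord j) * toConv (b.coord i)) (b j ⊗ₜ b i) := by
        simp [integralProj_apply, hΦ]
    _ = ∑ i, b.coord i 1 • counit (R := R) (b i) := by
        rw [sum_sum_coord_mul]
        refine Finset.sum_congr rfl fun i _ => ?_
        simp [Φ, Module.Dual.transpose_apply, Algebra.algebraMap_eq_smul_one, mul_comm]
    _ = 1 := by rw [sum_coord_smul, Bialgebra.counit_one]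

lemma IsLeftIntegral.integralProj_hit_antipode {l : H★} (hl : IsLeftIntegral l) (a : H) :
    integralProj b (hit (antipode R a) l) = counit (R := R) a • l := by
  have key (x y : H) :
      ∑ i, b.coord i y • hit (antipode R (antipode R (b i))) (hit (antipode R x) l) =
        hit (antipode R (x * antipode R y)) l := by
    simpa [← hit_mul, antipode_mul_antidistrib] using
      sum_coord_smul b y (hit.flip l ∘ₗ antipode R ∘ₗ LinearMap.mulLeft R x ∘ₗ antipode R)
  simp_rw [integralProj_apply, hl.mul_hit_antipode _ (ℛ R a), map_sum, map_smul]
  rw [Finset.sum_comm]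
  simp_rw [key]
  rw [← LinearMap.sum_apply, ← map_sum, ← map_sum, sum_mul_antipode_eq_smul]
  simp

lemma IsLeftIntegral.integralProj_mul_hit_antipode {l : H★} (hl : IsLeftIntegral l) (f : H★)
    (h : H) : integralProj b (f * hit (antipode R h) l) = f h • l := by
  simp only [hl.mul_hit_antipode f (ℛ R h), map_sum, map_smul, hl.integralProj_hit_antipode,
    smul_smul, ← Finset.sum_smul]
  conv_rhs => rw [← sum_counit_smul (ℛ R h)]
  simp [mul_comm]

end Basis

lemma exists_isLeftIntegral_ne_zero [Nontrivial R] [Module.Free R H] [Module.Finite R H] :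
    ∃ l : H★, IsLeftIntegral l ∧ l ≠ 0 := by
  let b := Module.Free.chooseBasis R H
  obtain ⟨i, -, hi⟩ := Finset.exists_ne_zero_of_sum_ne_zero
    ((sum_integralProj_coord_apply_antipode b).trans_ne one_ne_zero)
  refine ⟨integralProj b (toConv (b.coord i)), isLeftIntegral_integralProj b _, fun h => hi ?_⟩
  simp [h]

end HopfAlgebra

theorem HopfAlgebra.antipode_injective {k H : Type*} [Field k] [Ring H] [HopfAlgebra k H]
    [FiniteDimensional k H] : Function.Injective (antipode k (A := H)) := by
  obtain ⟨l, hl, hl0⟩ := exists_isLeftIntegral_ne_zero (R := k) (H := H)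
  refine (injective_iff_map_eq_zero _).2 fun h hSh => ?_
  refine (Module.forall_dual_apply_eq_zero_iff k h).1 fun φ => ?_
  have := hl.integralProj_mul_hit_antipode (Module.finBasis k H) (toConv φ) h
  simpa [hSh, hl0] using this.symm

/-- Every finite-dimensional Hopf algebra over a field has a bijective antipode. -/
theorem antipode_bijective_of_finiteDimensional
    {k H : Type*} [Field k] [Ring H] [HopfAlgebra k H] [FiniteDimensional k H] :
    Function.Bijective (HopfAlgebra.antipode (R := k) (A := H)) :=
  ⟨HopfAlgebra.antipode_injective,
    LinearMap.injective_iff_surjective.1 HopfAlgebra.antipode_injective⟩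
end
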